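/- Fix linear maps A, Ā : ℝ^{d_x} →ₗ ℝ^{d_x}, B, B̄ : ℝ^{d_u} →ₗ ℝ^{d_x}, gain matrices θ_t, θ̄_t : ℝ^{d_x} →ₗ ℝ^{d_u}, noises w^i_t ∈ ℝ^{d_x}, normalized weights α with ∑ α_i = 1, and a deterministic sequence z_t ∈ ℝ^{d_x}. Define two trajectories with the same initial conditions x^i_1 = x̂^i_1: (i) x^i_{t+1} = A x^i_t + B u^i_t + Ā x̄_t + B̄ ū_t + w^i_t with u^i_t = θ_t x^i_t + (θ̄_t - θ_t) x̄_t; (ii) x̂^i_{t+1} = A x̂^i_t + B û^i_t + Ā x̂̄_t + B̄ û̄_t + w^i_t with û^i_t = θ_t x̂^i_t + (θ̄_t - θ_t) z_t, where x̄_t, x̂̄_t (resp. ū_t, û̄_t) are the weighted averages. Then for all t and all i, x^i_t - x̄_t = x̂^i_t - x̂̄_t and u^i_t - ū_t = û^i_t - û̄_t. -/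

import Mathlib

/-!
Passing to deviations from the `α`-weighted average is linear, commutes with matrices and, since
`∑ α = 1`, kills every term common to all agents: the mean-field terms `Ā x̄ + B̄ ū` and the
feedback through `x̄` resp. `z`. So along both trajectories the state deviations obey the same
recursion `e(t+1) = (A + B θ_t) e(t) + (deviation of w_t)` from the same start, and the control
deviations are `θ_t e(t)`.
-/

open Matrix

section Deviation

variable {ι R M N : Type*} [Fintype ι] [Ring R]
  [AddCommGroup M] [Module R M] [AddCommGroup N] [Module R N]

def deviation (α : ι → R) (v : ι → M) (i : ι) : M :=
  v i - ∑ j, α j • v j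

theorem deviation_add (α : ι → R) (v w : ι → M) (i : ι) :
    deviation α (fun j => v j + w j) i = deviation α v i + deviation α w i := by
  simp only [deviation, smul_add, Finset.sum_add_distrib]
  abel

theorem deviation_const {α : ι → R} (hα : ∑ j, α j = 1) (c : M) (i : ι) :
    deviation α (fun _ => c) i = 0 := by
  rw [deviation, ← Finset.sum_smul, hα, one_smul, sub_self]

theorem deviation_map (α : ι → R) (f : M →ₗ[R] N) (v : ι → M) (i : ι) :
    deviation α (fun j => f (v j)) i = f (deviation α v i) := by
  simp only [deviation, map_sub, map_sum, map_smul]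

theorem deviation_mulVec {S m k : Type*} [CommRing S] [Fintype k] {α : ι → S}
    (A : Matrix m k S) (v : ι → k → S) (i : ι) :
    deviation α (fun j => A *ᵥ v j) i = A *ᵥ deviation α v i :=
  deviation_map α A.mulVecLin v i

end Deviation

theorem deviations_equal_along_trajectories_general (n dx du : ℕ)
    (α : Fin n → ℝ) (hα : ∑ i, α i = 1)
    (A Abar : Matrix (Fin dx) (Fin dx) ℝ) (B Bbar : Matrix (Fin dx) (Fin du) ℝ)
    (θ θbar : ℕ → Matrix (Fin du) (Fin dx) ℝ)
    (w : ℕ → Fin n → (Fin dx → ℝ)) (z : ℕ → (Fin dx → ℝ))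
    (x xh : ℕ → Fin n → (Fin dx → ℝ)) (u uh : ℕ → Fin n → (Fin du → ℝ))
    (hinit : x 0 = xh 0)
    (hu : ∀ t i, u t i =
      (θ t).mulVec (x t i) + (θbar t - θ t).mulVec (∑ j, α j • x t j))
    (hx : ∀ t i, x (t + 1) i =
      A.mulVec (x t i) + B.mulVec (u t i)
        + Abar.mulVec (∑ j, α j • x t j) + Bbar.mulVec (∑ j, α j • u t j) + w t i)
    (huh : ∀ t i, uh t i =
      (θ t).mulVec (xh t i) + (θbar t - θ t).mulVec (z t))
    (hxh : ∀ t i, xh (t + 1) i =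
      A.mulVec (xh t i) + B.mulVec (uh t i)
        + Abar.mulVec (∑ j, α j • xh t j) + Bbar.mulVec (∑ j, α j • uh t j) + w t i) :
    ∀ t i, x t i - ∑ j, α j • x t j = xh t i - ∑ j, α j • xh t j ∧
      u t i - ∑ j, α j • u t j = uh t i - ∑ j, α j • uh t j := by
  have hu_dev : ∀ t i, deviation α (u t) i = θ t *ᵥ deviation α (x t) i := by
    intro t i
    rw [funext (hu t)]
    simp only [deviation_add, deviation_mulVec, deviation_const hα, add_zero]
  have huh_dev : ∀ t i, deviation α (uh t) i = θ t *ᵥ deviation α (xh t) i := by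
    intro t i
    rw [funext (huh t)]
    simp only [deviation_add, deviation_mulVec, deviation_const hα, add_zero]
  have hx_dev : ∀ t i, deviation α (x t) i = deviation α (xh t) i := by
    intro t
    induction t with
    | zero => simp only [hinit, implies_true]
    | succ t ih =>
      intro i
      rw [funext (hx t), funext (hxh t)]
      simp only [deviation_add, deviation_mulVec, deviation_const hα, hu_dev, huh_dev, ih]
  intro t i
  exact ⟨hx_dev t i, (hu_dev t i).trans ((congrArg _ (hx_dev t i)).trans (huh_dev t i).symm)⟩

/-- Lemma 3: the deviations from the weighted averages are identical along the
deep-state-sharing trajectory (which feeds back the true deep state) and the no-sharing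
trajectory (which feeds back a deterministic prediction `z`). -/
theorem deviations_equal_along_trajectories (n dx du : ℕ) (hn : 1 ≤ n)
    (α : Fin n → ℝ) (hα : ∑ i, α i = 1)
    (A Abar : Matrix (Fin dx) (Fin dx) ℝ) (B Bbar : Matrix (Fin dx) (Fin du) ℝ)
    (θ θbar : ℕ → Matrix (Fin du) (Fin dx) ℝ)
    (w : ℕ → Fin n → (Fin dx → ℝ)) (z : ℕ → (Fin dx → ℝ))
    (x xh : ℕ → Fin n → (Fin dx → ℝ)) (u uh : ℕ → Fin n → (Fin du → ℝ))
    (hinit : x 0 = xh 0)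
    (hu : ∀ t i, u t i =
      (θ t).mulVec (x t i) + (θbar t - θ t).mulVec (∑ j, α j • x t j))
    (hx : ∀ t i, x (t + 1) i =
      A.mulVec (x t i) + B.mulVec (u t i)
        + Abar.mulVec (∑ j, α j • x t j) + Bbar.mulVec (∑ j, α j • u t j) + w t i)
    (huh : ∀ t i, uh t i =
      (θ t).mulVec (xh t i) + (θbar t - θ t).mulVec (z t))
    (hxh : ∀ t i, xh (t + 1) i =
      A.mulVec (xh t i) + B.mulVec (uh t i)
        + Abar.mulVec (∑ j, α j • xh t j) + Bbar.mulVec (∑ j, α j • uh t j) + w t i) :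
    ∀ t i, x t i - ∑ j, α j • x t j = xh t i - ∑ j, α j • xh t j ∧
      u t i - ∑ j, α j • u t j = uh t i - ∑ j, α j • uh t j :=
  deviations_equal_along_trajectories_general n dx du α hα A Abar B Bbar θ θbar w z x xh u uh hinit
    hu hx huh hxh
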